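/- Fix real constants m₀ > 0, ω > 0, ħ > 0, a > -1, γ > 1/2, set λ₀ = √(m₀ω/ħ) and α' = (1/2)·( (2γ-1)/(a+1) + 1 ). For a nonnegative integer m let L_m^{(α')}(t) = Σ_{k=0}^{m} (-1)^k · Γ(m+α'+1) / ( Γ(k+α'+1)·(m-k)!·k! ) · t^k be the generalized Laguerre polynomial, and define ψ_{2m+1}(x) = (λ₀²x²)^{(3a+2γ-1)/4}·x·exp( -(λ₀²x²)^{a+1}/(2(a+1)) )·L_m^{(α')}( (λ₀²x²)^{a+1}/(a+1) ). Then for every x ≠ 0: ψ_{2m+1}''(x) - (2a/x)·ψ_{2m+1}'(x) + [ ( a(3a+2)/4 - (a+1)(γ-1/2) - (γ-1/2)² )·x⁻² + κ²λ₀^{2a}|x|^{2a} - λ₀^{4a+4}|x|^{4a}x² ]·ψ_{2m+1}(x) = 0, where κ² = λ₀²·( (a+1)(4m+3) + 2γ - 1 ); equivalently ψ_{2m+1} solves the odd-parity Schrödinger equation with energy E_{2m+1} = ħ²κ²/(2m₀) = (a+1)·ħω·( 2m + 3/2 + (γ-1/2)/(a+1) ). -/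

import Mathlib

/-!
Write `w = (λ₀²x²)^(a+1)`, `t = w/(a+1)` and `p = (3a+2γ-1)/4`. Then `ψ = F · L(t)` where
`F = (λ₀²x²)^p · x · exp(-t/2)` has logarithmic derivative `(2p+1-w)/x` and `t' = 2w/x`, so by the
chain rule `ψ'' - (2a/x)ψ' + Vψ` is `F/x²` times a combination of `L(t)`, `L'(t)`, `L''(t)`
whose coefficients are polynomials in `w`. The coefficient of `L''` is `4(a+1)w·t`, so Laguerre's
equation `tL'' + (α'+1-t)L' + mL = 0` eliminates it; what is left vanishes identically, the `L'`
terms because `(a+1)(α'+1) = 2p + 3/2` and the `L` terms by the choice of `κ²`.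
Laguerre's equation itself is the coefficient recurrence `(k+1)(k+1+α)c_{k+1} = -(m-k)c_k`.
-/

/-- The generalized Laguerre polynomial
`L_m^(α)(t) = Σ_{k=0}^{m} (-1)^k·Γ(m+α+1)/(Γ(k+α+1)·(m-k)!·k!)·t^k`. -/
noncomputable def lagPoly (α : ℝ) (m : ℕ) (t : ℝ) : ℝ :=
  ∑ k ∈ Finset.range (m + 1),
    (-1 : ℝ) ^ k * Real.Gamma ((m : ℝ) + α + 1)
      / (Real.Gamma ((k : ℝ) + α + 1) * (Nat.factorial (m - k) : ℝ) * (Nat.factorial k : ℝ))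
      * t ^ k

/-- The odd-parity parabose wavefunction
`ψ_{2m+1}(x) = (λ₀²x²)^((3a+2γ-1)/4)·x·exp(-(λ₀²x²)^(a+1)/(2(a+1)))·L_m^(α')((λ₀²x²)^(a+1)/(a+1))`
with `α' = ((2γ-1)/(a+1) + 1)/2`. -/
noncomputable def psiOdd (lam a γ : ℝ) (m : ℕ) (x : ℝ) : ℝ :=
  (lam ^ 2 * x ^ 2) ^ ((3 * a + 2 * γ - 1) / 4) * x
    * Real.exp (-((lam ^ 2 * x ^ 2) ^ (a + 1)) / (2 * (a + 1)))
    * lagPoly ((1 / 2) * ((2 * γ - 1) / (a + 1) + 1)) m ((lam ^ 2 * x ^ 2) ^ (a + 1) / (a + 1))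

open Polynomial

/-- Mathlib's `Γ` vanishes at its poles, so `Γ⁻¹` is the entire reciprocal Gamma function and this
holds for every real `s`. -/
theorem Real.inv_Gamma_eq_mul_inv_Gamma_add_one (s : ℝ) :
    (Gamma s)⁻¹ = s * (Gamma (s + 1))⁻¹ := by
  rcases eq_or_ne s 0 with rfl | hs
  · simp
  · rw [Gamma_add_one hs, mul_inv, ← mul_assoc, mul_inv_cancel₀ hs, one_mul]

noncomputable def laguerreCoeff (α : ℝ) (m k : ℕ) : ℝ :=
  (-1 : ℝ) ^ k * Real.Gamma ((m : ℝ) + α + 1)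
    / (Real.Gamma ((k : ℝ) + α + 1) * (Nat.factorial (m - k) : ℝ) * (Nat.factorial k : ℝ))

noncomputable def laguerre (α : ℝ) (m : ℕ) : ℝ[X] :=
  ∑ k ∈ Finset.range (m + 1), C (laguerreCoeff α m k) * X ^ k

theorem lagPoly_eq_eval_laguerre (α : ℝ) (m : ℕ) (t : ℝ) :
    lagPoly α m t = (laguerre α m).eval t := by
  simp [lagPoly, laguerre, laguerreCoeff, eval_finsetSum]

theorem coeff_laguerre (α : ℝ) (m k : ℕ) :
    (laguerre α m).coeff k = if k ≤ m then laguerreCoeff α m k else 0 := by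
  simp [laguerre]

theorem laguerreCoeff_recurrence (α : ℝ) {m k : ℕ} (hk : k < m) :
    laguerreCoeff α m (k + 1) * (k + 1) * (k + 1 + α) + laguerreCoeff α m k * (m - k) = 0 := by
  obtain ⟨j, rfl⟩ := Nat.exists_eq_add_of_lt hk
  have hsub : k + j + 1 - k = j + 1 := by omega
  have hsub' : k + j + 1 - (k + 1) = j := by omega
  simp only [laguerreCoeff, div_eq_mul_inv, mul_inv, hsub, hsub', Nat.factorial_succ]
  push_cast
  rw [add_right_comm (k : ℝ) 1 α, Real.inv_Gamma_eq_mul_inv_Gamma_add_one ((k : ℝ) + α + 1)]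
  field_simp
  ring

theorem coeff_laguerre_recurrence (α : ℝ) (m k : ℕ) :
    (laguerre α m).coeff (k + 1) * (k + 1) * (k + 1 + α) + (laguerre α m).coeff k * (m - k) = 0 := by
  simp only [coeff_laguerre]
  rcases lt_trichotomy k m with hk | rfl | hk
  · simp [hk.le, Nat.succ_le_of_lt hk, laguerreCoeff_recurrence α hk]
  · simp
  · simp [hk.not_ge, (hk.trans (Nat.lt_succ_self k)).not_ge]

theorem laguerre_ode (α : ℝ) (m : ℕ) :
    X * derivative (derivative (laguerre α m)) + (C (α + 1) - X) * derivative (laguerre α m)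
      + C (m : ℝ) * laguerre α m = 0 := by
  ext n
  have h := coeff_laguerre_recurrence α m n
  cases n with
  | zero =>
    simp only [map_add, map_one, map_natCast, coeff_add, mul_coeff_zero, coeff_X_zero,
      coeff_derivative, zero_add, Nat.cast_one, CharP.cast_eq_zero, mul_one, zero_mul, coeff_sub,
      coeff_C_zero, coeff_one_zero, sub_zero, coeff_natCast_ite, ↓reduceIte, coeff_zero]
    linear_combination h
  | succ n =>
    simp only [map_add, map_one, sub_mul, add_mul, one_mul, map_natCast, coeff_add, coeff_X_mul,
      coeff_derivative, Nat.cast_add, Nat.cast_one, coeff_sub, coeff_C_mul, coeff_natCast_mul,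
      coeff_zero]
    push_cast at h ⊢
    linear_combination h

section RpowMulSq

variable {c b x : ℝ}

theorem hasDerivAt_rpow_mul_sq (r : ℝ) (hc : 0 < c) (hx : x ≠ 0) :
    HasDerivAt (fun y => (c * y ^ 2) ^ r) (2 * r * (c * x ^ 2) ^ r / x) x := by
  have hpos : 0 < c * x ^ 2 := by positivity
  have h := ((hasDerivAt_pow 2 x).const_mul c).rpow_const (p := r) (Or.inl hpos.ne')
  refine h.congr_deriv ?_
  rw [Real.rpow_sub hpos, Real.rpow_one]
  field_simp
  norm_num
  ring

theorem hasDerivAt_rpow_mul_sq_mul_exp (p : ℝ) (hc : 0 < c) (hb : b ≠ 0) (hx : x ≠ 0) :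
    HasDerivAt (fun y => (c * y ^ 2) ^ p * y * Real.exp (-((c * y ^ 2) ^ b) / (2 * b)))
      ((2 * p + 1 - (c * x ^ 2) ^ b) / x
        * ((c * x ^ 2) ^ p * x * Real.exp (-((c * x ^ 2) ^ b) / (2 * b)))) x := by
  have h := ((hasDerivAt_rpow_mul_sq p hc hx).fun_mul (hasDerivAt_id' x)).fun_mul
    ((hasDerivAt_rpow_mul_sq b hc hx).fun_neg.div_const (2 * b)).exp
  refine h.congr_deriv ?_
  field_simp
  ring

theorem hasDerivAt_const_sub_rpow_mul_sq_div (p : ℝ) (hc : 0 < c) (hx : x ≠ 0) :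
    HasDerivAt (fun y => (2 * p + 1 - (c * y ^ 2) ^ b) / y)
      (((c * x ^ 2) ^ b - 2 * p - 1 - 2 * b * (c * x ^ 2) ^ b) / x ^ 2) x := by
  have h := ((hasDerivAt_rpow_mul_sq b hc hx).const_sub (2 * p + 1)).fun_div (hasDerivAt_id' x) hx
  refine h.congr_deriv ?_
  field_simp
  ring

theorem hasDerivAt_rpow_mul_sq_div_const (hc : 0 < c) (hb : b ≠ 0) (hx : x ≠ 0) :
    HasDerivAt (fun y => (c * y ^ 2) ^ b / b) (2 * (c * x ^ 2) ^ b / x) x := by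
  refine (hasDerivAt_rpow_mul_sq b hc hx).div_const b |>.congr_deriv ?_
  field_simp

theorem hasDerivAt_two_mul_rpow_mul_sq_div (hc : 0 < c) (hx : x ≠ 0) :
    HasDerivAt (fun y => 2 * (c * y ^ 2) ^ b / y) ((4 * b - 2) * (c * x ^ 2) ^ b / x ^ 2) x := by
  have h := ((hasDerivAt_rpow_mul_sq b hc hx).const_mul 2).fun_div (hasDerivAt_id' x) hx
  refine h.congr_deriv ?_
  field_simp
  ring

end RpowMulSq

theorem hasDerivAt_mul_eval_comp (P : ℝ[X]) {F φ t τ : ℝ → ℝ} {x : ℝ}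
    (hF : HasDerivAt F (φ x * F x) x) (ht : HasDerivAt t (τ x) x) :
    HasDerivAt (fun y => F y * P.eval (t y))
      (F x * (φ x * P.eval (t x) + τ x * P.derivative.eval (t x))) x := by
  have h := hF.fun_mul ((P.hasDerivAt (t x)).comp x ht)
  exact h.congr_deriv (by simp only [Function.comp_apply]; ring)

theorem deriv_deriv_mul_eval_comp (P : ℝ[X]) {F φ φ' t τ τ' : ℝ → ℝ} {U : Set ℝ} {x : ℝ}
    (hU : IsOpen U) (hx : x ∈ U)
    (hF : ∀ y ∈ U, HasDerivAt F (φ y * F y) y) (hφ : ∀ y ∈ U, HasDerivAt φ (φ' y) y)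
    (ht : ∀ y ∈ U, HasDerivAt t (τ y) y) (hτ : ∀ y ∈ U, HasDerivAt τ (τ' y) y) :
    deriv (deriv fun y => F y * P.eval (t y)) x
      = F x * ((φ' x + φ x ^ 2) * P.eval (t x)
          + (2 * φ x * τ x + τ' x) * P.derivative.eval (t x)
          + τ x ^ 2 * P.derivative.derivative.eval (t x)) := by
  have hderiv : deriv (fun y => F y * P.eval (t y)) =ᶠ[nhds x]
      fun y => F y * φ y * P.eval (t y) + F y * τ y * P.derivative.eval (t y) :=
    Filter.eventually_of_mem (hU.mem_nhds hx) fun y hy =>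
      (hasDerivAt_mul_eval_comp P (hF y hy) (ht y hy)).deriv.trans (by ring)
  rw [hderiv.deriv_eq]
  have hP := (P.hasDerivAt (t x)).comp x (ht x hx)
  have hP' := (P.derivative.hasDerivAt (t x)).comp x (ht x hx)
  have h := (((hF x hx).fun_mul (hφ x hx)).fun_mul hP).fun_add
    (((hF x hx).fun_mul (hτ x hx)).fun_mul hP')
  exact h.deriv.trans (by simp only [Function.comp_apply]; ring)

theorem sq_mul_sq_rpow_eq {lam : ℝ} (hlam : 0 < lam) (x r : ℝ) :
    (lam ^ 2 * x ^ 2) ^ r = lam ^ (2 * r) * |x| ^ (2 * r) := by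
  rw [← sq_abs x, Real.mul_rpow (by positivity) (by positivity), ← Real.rpow_natCast,
    ← Real.rpow_natCast, ← Real.rpow_mul hlam.le, ← Real.rpow_mul (abs_nonneg x)]
  norm_num

theorem psiOdd_ode (lam a γ : ℝ) (m : ℕ) (hlam : 0 < lam) (ha : a + 1 ≠ 0) (x : ℝ) (hx : x ≠ 0) :
    deriv (deriv (psiOdd lam a γ m)) x - (2 * a / x) * deriv (psiOdd lam a γ m) x
        + ((a * (3 * a + 2) / 4 - (a + 1) * (γ - 1 / 2) - (γ - 1 / 2) ^ 2) * (x ^ 2)⁻¹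
            + (lam ^ 2 * ((a + 1) * (4 * (m : ℝ) + 3) + 2 * γ - 1)) * lam ^ (2 * a) * |x| ^ (2 * a)
            - lam ^ (4 * a + 4) * |x| ^ (4 * a) * x ^ 2) * psiOdd lam a γ m x = 0 := by
  set α := (1 / 2) * ((2 * γ - 1) / (a + 1) + 1)
  set p := (3 * a + 2 * γ - 1) / 4
  have hc : 0 < lam ^ 2 := by positivity
  have hψ : psiOdd lam a γ m = fun y =>
      (lam ^ 2 * y ^ 2) ^ p * y * Real.exp (-((lam ^ 2 * y ^ 2) ^ (a + 1)) / (2 * (a + 1)))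
        * (laguerre α m).eval ((lam ^ 2 * y ^ 2) ^ (a + 1) / (a + 1)) := by
    funext y
    rw [psiOdd, lagPoly_eq_eval_laguerre]
  rw [hψ, (hasDerivAt_mul_eval_comp _ (hasDerivAt_rpow_mul_sq_mul_exp p hc ha hx)
      (hasDerivAt_rpow_mul_sq_div_const hc ha hx)).deriv,
    deriv_deriv_mul_eval_comp _ isOpen_compl_singleton hx
      (fun y hy => hasDerivAt_rpow_mul_sq_mul_exp p hc ha hy)
      (fun y hy => hasDerivAt_const_sub_rpow_mul_sq_div p hc hy)
      (fun y hy => hasDerivAt_rpow_mul_sq_div_const hc ha hy)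
      (fun y hy => hasDerivAt_two_mul_rpow_mul_sq_div hc hy)]
  have hL := congrArg (eval ((lam ^ 2 * x ^ 2) ^ (a + 1) / (a + 1))) (laguerre_ode α m)
  simp only [eval_add, eval_mul, eval_sub, eval_X, eval_C, eval_zero] at hL
  have hw : (lam ^ 2 * x ^ 2) ^ (a + 1) = lam ^ (2 * a) * |x| ^ (2 * a) * (lam ^ 2 * x ^ 2) := by
    rw [Real.rpow_add_one (by positivity), sq_mul_sq_rpow_eq hlam]
  have h4 : lam ^ (4 * a + 4) * |x| ^ (4 * a) = (lam ^ (2 * a) * |x| ^ (2 * a)) ^ 2 * lam ^ 4 := by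
    rw [show 4 * a + 4 = 2 * a * (2 : ℕ) + (4 : ℕ) by push_cast; ring,
      show 4 * a = 2 * a * (2 : ℕ) by push_cast; ring, Real.rpow_add hlam, Real.rpow_natCast,
      Real.rpow_mul_natCast hlam.le, Real.rpow_mul_natCast (abs_nonneg x)]
    ring
  rw [h4, mul_assoc _ (lam ^ (2 * a))]
  simp only [hw] at hL ⊢
  generalize lam ^ (2 * a) * |x| ^ (2 * a) = A at hL ⊢
  generalize (lam ^ 2 * x ^ 2) ^ p * x * Real.exp (-(A * (lam ^ 2 * x ^ 2)) / (2 * (a + 1))) = E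
  generalize eval (A * (lam ^ 2 * x ^ 2) / (a + 1)) (laguerre α m) = P₀ at hL ⊢
  generalize eval (A * (lam ^ 2 * x ^ 2) / (a + 1)) (derivative (laguerre α m)) = P₁ at hL ⊢
  generalize eval (A * (lam ^ 2 * x ^ 2) / (a + 1)) (derivative (derivative (laguerre α m))) = P₂
    at hL ⊢
  -- the coefficient of `P₂` in the goal is `E · 4(a+1)Aλ₀²` times its coefficient `t` in `hL`
  linear_combination (norm := skip) (E * 4 * (a + 1) * A * lam ^ 2) * hL
  simp only [α, p]
  field_simp
  ring

theorem stmt17_general (m₀ ω hbar a γ : ℝ) (hm₀ : 0 < m₀) (hω : 0 < ω) (hhb : 0 < hbar)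
    (ha : -1 < a)
    (lam : ℝ) (hlam : lam = Real.sqrt (m₀ * ω / hbar)) (m : ℕ) :
    (∀ x : ℝ, x ≠ 0 →
      deriv (deriv (psiOdd lam a γ m)) x - (2 * a / x) * deriv (psiOdd lam a γ m) x
        + ((a * (3 * a + 2) / 4 - (a + 1) * (γ - 1 / 2) - (γ - 1 / 2) ^ 2) * (x ^ 2)⁻¹
            + (lam ^ 2 * ((a + 1) * (4 * (m : ℝ) + 3) + 2 * γ - 1)) * lam ^ (2 * a) * |x| ^ (2 * a)
            - lam ^ (4 * a + 4) * |x| ^ (4 * a) * x ^ 2) * psiOdd lam a γ m x = 0) ∧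
    hbar ^ 2 * (lam ^ 2 * ((a + 1) * (4 * (m : ℝ) + 3) + 2 * γ - 1)) / (2 * m₀)
      = (a + 1) * hbar * ω * (2 * (m : ℝ) + 3 / 2 + (γ - 1 / 2) / (a + 1)) := by
  have hq : 0 < m₀ * ω / hbar := by positivity
  have ha' : a + 1 ≠ 0 := by linarith
  refine ⟨psiOdd_ode lam a γ m (hlam ▸ Real.sqrt_pos.mpr hq) ha', ?_⟩
  rw [hlam, Real.sq_sqrt hq.le]
  field_simp
  ring

/-- `ψ_{2m+1}` solves the odd-parity Schrödinger equation of the deformed parabose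
oscillator with `κ² = λ₀²((a+1)(4m+3)+2γ-1)`; equivalently the energy is
`E_{2m+1} = ħ²κ²/(2m₀) = (a+1)ħω(2m + 3/2 + (γ-1/2)/(a+1))`. -/
theorem stmt17 (m₀ ω hbar a γ : ℝ) (hm₀ : 0 < m₀) (hω : 0 < ω) (hhb : 0 < hbar)
    (ha : -1 < a) (hγ : 1 / 2 < γ)
    (lam : ℝ) (hlam : lam = Real.sqrt (m₀ * ω / hbar)) (m : ℕ) :
    (∀ x : ℝ, x ≠ 0 →
      deriv (deriv (psiOdd lam a γ m)) x - (2 * a / x) * deriv (psiOdd lam a γ m) x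
        + ((a * (3 * a + 2) / 4 - (a + 1) * (γ - 1 / 2) - (γ - 1 / 2) ^ 2) * (x ^ 2)⁻¹
            + (lam ^ 2 * ((a + 1) * (4 * (m : ℝ) + 3) + 2 * γ - 1)) * lam ^ (2 * a) * |x| ^ (2 * a)
            - lam ^ (4 * a + 4) * |x| ^ (4 * a) * x ^ 2) * psiOdd lam a γ m x = 0) ∧
    hbar ^ 2 * (lam ^ 2 * ((a + 1) * (4 * (m : ℝ) + 3) + 2 * γ - 1)) / (2 * m₀)
      = (a + 1) * hbar * ω * (2 * (m : ℝ) + 3 / 2 + (γ - 1 / 2) / (a + 1)) :=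
  stmt17_general m₀ ω hbar a γ hm₀ hω hhb ha lam hlam m
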